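/- arXiv:1211.6158 — 6 statements merged into one kernel-verified Lean document; each statement's English description precedes it below -/
import Mathlib

section
/- Under the FTL setting, the cumulative stability satisfies Σ_{t=1}^T ‖w_t − w_{t+1}‖ ≤ Σ_{t=1}^T 2L/((2t−1)α) ≤ (2L/α)(1 + ln T). -/
/-!
The partial sum `∑_{τ ≤ k} ℓ_τ` is `kα`-strongly convex, so it exceeds its minimum at `u` by at
least `kα/2 · ‖u - w_{k+1}‖²`. Writing this for two consecutive leaders `w_{k+1}`, `w_{k+2}` and
adding, the objectives differ only by the `L`-Lipschitz loss `ℓ_{k+1}`, whence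
`(2k+1)α/2 · ‖w_{k+1} - w_{k+2}‖² ≤ L ‖w_{k+1} - w_{k+2}‖`. Finally `1/(2t-1) ≤ 1/t` and
`H_T ≤ 1 + log T`.
-/

open Finset Filter Topology

section StrongConvexity

variable {E : Type*} [NormedAddCommGroup E] [NormedSpace ℝ E] {s : Set E} {f h : E → ℝ}
  {m n : ℝ}

lemma StrongConvexOn.add {g : E → ℝ} (hf : StrongConvexOn s m f) (hg : StrongConvexOn s n g) :
    StrongConvexOn s (m + n) (f + g) := by
  unfold StrongConvexOn
  convert UniformConvexOn.add hf hg using 2 with r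
  simp only [Pi.add_apply]
  ring

lemma StrongConvexOn.sum {ι : Type*} {t : Finset ι} {m : ι → ℝ} {f : ι → E → ℝ}
    (hs : Convex ℝ s) (hf : ∀ i ∈ t, StrongConvexOn s (m i) (f i)) :
    StrongConvexOn s (∑ i ∈ t, m i) (fun x ↦ ∑ i ∈ t, f i x) := by
  classical
  induction t using Finset.induction with
  | empty => simpa using convexOn_const (0 : ℝ) hs
  | insert i t hi ih =>
    simp_rw [sum_insert hi]
    exact (hf i (mem_insert_self i t)).add (ih fun j hj ↦ hf j (mem_insert_of_mem hj))

lemma StrongConvexOn.mul_sq_norm_sub_le_of_isMinOn {x₀ x : E} (hf : StrongConvexOn s m f)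
    (hmin : IsMinOn f s x₀) (hx₀ : x₀ ∈ s) (hx : x ∈ s) :
    m / 2 * ‖x - x₀‖ ^ 2 ≤ f x - f x₀ := by
  -- Compare `f x₀` with `f` at `a • x + (1 - a) • x₀` and let `a → 0⁺`.
  have hseg : ∀ a ∈ Set.Ioo (0 : ℝ) 1, (1 - a) * (m / 2 * ‖x - x₀‖ ^ 2) ≤ f x - f x₀ := by
    rintro a ⟨ha₀, ha₁⟩
    have hb : (0 : ℝ) ≤ 1 - a := by linarith
    have hconv := hf.2 hx hx₀ ha₀.le hb (add_sub_cancel a 1)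
    have hle : f x₀ ≤ f (a • x + (1 - a) • x₀) :=
      hmin (hf.1 hx hx₀ ha₀.le hb (add_sub_cancel a 1))
    simp only [smul_eq_mul] at hconv
    refine le_of_mul_le_mul_left ?_ ha₀
    linarith
  have hlim : Tendsto (fun a : ℝ ↦ (1 - a) * (m / 2 * ‖x - x₀‖ ^ 2)) (𝓝[>] 0)
      (𝓝 (m / 2 * ‖x - x₀‖ ^ 2)) := by
    refine (Continuous.tendsto' ?_ 0 _ (by simp)).mono_left nhdsWithin_le_nhds
    fun_prop
  refine le_of_tendsto hlim ?_
  filter_upwards [Ioo_mem_nhdsGT one_pos] with a ha using hseg a ha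

lemma StrongConvexOn.norm_sub_le_of_isMinOn_add {L : ℝ} {x y : E} (hf : StrongConvexOn s m f)
    (hfh : StrongConvexOn s n (f + h)) (hmn : 0 < m + n) (hL : 0 ≤ L)
    (hh : ∀ x ∈ s, ∀ y ∈ s, |h x - h y| ≤ L * ‖x - y‖)
    (hx : IsMinOn f s x) (hy : IsMinOn (f + h) s y) (hxs : x ∈ s) (hys : y ∈ s) :
    ‖x - y‖ ≤ 2 * L / (m + n) := by
  have h₁ := hf.mul_sq_norm_sub_le_of_isMinOn hx hxs hys
  have h₂ := hfh.mul_sq_norm_sub_le_of_isMinOn hy hys hxs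
  have hlip := (le_abs_self _).trans (hh x hxs y hys)
  rw [norm_sub_rev] at h₁
  simp only [Pi.add_apply] at h₂
  have hquad : (m + n) / 2 * ‖x - y‖ ^ 2 ≤ L * ‖x - y‖ := by linarith
  rcases (norm_nonneg (x - y)).eq_or_lt with hδ | hδ
  · rw [← hδ]
    positivity
  · rw [le_div_iff₀ hmn]
    nlinarith

lemma norm_sub_le_of_isMinOn_partial_sums {α L : ℝ} {ℓ : ℕ → E → ℝ} {k : ℕ} {x y : E}
    (hs : Convex ℝ s) (hα : 0 < α) (hL : 0 ≤ L) (hsc : ∀ τ, StrongConvexOn s α (ℓ τ))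
    (hlip : ∀ x ∈ s, ∀ y ∈ s, |ℓ (k + 1) x - ℓ (k + 1) y| ≤ L * ‖x - y‖)
    (hx : IsMinOn (fun u ↦ ∑ τ ∈ Icc 1 k, ℓ τ u) s x)
    (hy : IsMinOn (fun u ↦ ∑ τ ∈ Icc 1 (k + 1), ℓ τ u) s y) (hxs : x ∈ s) (hys : y ∈ s) :
    ‖x - y‖ ≤ 2 * L / ((2 * k + 1) * α) := by
  have hsplit : (fun u ↦ ∑ τ ∈ Icc 1 (k + 1), ℓ τ u) =
      (fun u ↦ ∑ τ ∈ Icc 1 k, ℓ τ u) + ℓ (k + 1) :=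
    funext fun u ↦ sum_Icc_succ_top (by omega) _
  have hsum : ∀ j : ℕ, StrongConvexOn s (j * α) (fun u ↦ ∑ τ ∈ Icc 1 j, ℓ τ u) := fun j ↦ by
    simpa using StrongConvexOn.sum (t := Icc 1 j) hs fun τ _ ↦ hsc τ
  rw [hsplit] at hy
  have hk := hsum (k + 1)
  rw [hsplit] at hk
  convert (hsum k).norm_sub_le_of_isMinOn_add hk (by positivity) hL hlip hx hy hxs hys using 2
  push_cast
  ring

end StrongConvexity

lemma sum_Icc_inv_two_mul_sub_one_le_one_add_log (T : ℕ) :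
    ∑ t ∈ Icc 1 T, (2 * (t : ℝ) - 1)⁻¹ ≤ 1 + Real.log T := by
  calc ∑ t ∈ Icc 1 T, (2 * (t : ℝ) - 1)⁻¹
      ≤ ∑ t ∈ Icc 1 T, (t : ℝ)⁻¹ := by
        refine sum_le_sum fun t ht ↦ inv_anti₀ ?_ ?_
        · exact_mod_cast (mem_Icc.1 ht).1
        · have : (1 : ℝ) ≤ t := by exact_mod_cast (mem_Icc.1 ht).1
          linarith
    _ = harmonic T := by simp [harmonic_eq_sum_Icc]
    _ ≤ 1 + Real.log T := harmonic_le_one_add_log T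

theorem stmt_4_general {d : ℕ} (C : Set (EuclideanSpace ℝ (Fin d)))
    (hC : Convex ℝ C)
    (α L : ℝ) (hα : 0 < α) (hL : 0 ≤ L) (T : ℕ)
    (ℓ : ℕ → EuclideanSpace ℝ (Fin d) → ℝ)
    (hsc : ∀ τ, StrongConvexOn C α (ℓ τ))
    (hlip : ∀ τ, ∀ x ∈ C, ∀ y ∈ C, |ℓ τ x - ℓ τ y| ≤ L * ‖x - y‖)
    (w : ℕ → EuclideanSpace ℝ (Fin d)) (hw : ∀ t, w t ∈ C)
    (hmin : ∀ t, 1 ≤ t →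
      ∀ u ∈ C, ∑ τ ∈ Finset.Icc 1 t, ℓ τ (w (t + 1)) ≤ ∑ τ ∈ Finset.Icc 1 t, ℓ τ u) :
    ∑ t ∈ Finset.Icc 1 T, ‖w t - w (t + 1)‖ ≤
        ∑ t ∈ Finset.Icc 1 T, 2 * L / ((2 * (t : ℝ) - 1) * α) ∧
      ∑ t ∈ Finset.Icc 1 T, 2 * L / ((2 * (t : ℝ) - 1) * α) ≤
        2 * L / α * (1 + Real.log T) := by
  have hmin' : ∀ t, IsMinOn (fun u ↦ ∑ τ ∈ Icc 1 t, ℓ τ u) C (w (t + 1)) := by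
    rintro (_ | t)
    · simp [IsMinOn, IsMinFilter]
    · exact isMinOn_iff.2 (hmin _ (by omega))
  refine ⟨sum_le_sum fun t ht ↦ ?_, ?_⟩
  · obtain ⟨k, rfl⟩ : ∃ k, t = k + 1 := ⟨t - 1, by grind⟩
    refine (norm_sub_le_of_isMinOn_partial_sums hC hα hL hsc (hlip _) (hmin' k) (hmin' (k + 1))
      (hw _) (hw _)).trans_eq ?_
    push_cast
    ring
  · calc ∑ t ∈ Icc 1 T, 2 * L / ((2 * (t : ℝ) - 1) * α)
        = 2 * L / α * ∑ t ∈ Icc 1 T, (2 * (t : ℝ) - 1)⁻¹ := by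
          rw [mul_sum]
          exact sum_congr rfl fun t _ ↦ by rw [mul_comm _ α, ← div_div, div_eq_mul_inv]
      _ ≤ 2 * L / α * (1 + Real.log T) :=
          mul_le_mul_of_nonneg_left (sum_Icc_inv_two_mul_sub_one_le_one_add_log T) (by positivity)

/-- FTL cumulative stability bound: Σ‖w_t − w_{t+1}‖ ≤ Σ 2L/((2t−1)α) ≤ (2L/α)(1+ln T). -/
theorem stmt_4 {d : ℕ} (C : Set (EuclideanSpace ℝ (Fin d)))
    (hC : Convex ℝ C) (hCcpt : IsCompact C)
    (α L : ℝ) (hα : 0 < α) (hL : 0 ≤ L) (T : ℕ) (hT : 1 ≤ T)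
    (ℓ : ℕ → EuclideanSpace ℝ (Fin d) → ℝ)
    (hsc : ∀ τ, StrongConvexOn C α (ℓ τ))
    (hlip : ∀ τ, ∀ x ∈ C, ∀ y ∈ C, |ℓ τ x - ℓ τ y| ≤ L * ‖x - y‖)
    (w : ℕ → EuclideanSpace ℝ (Fin d)) (hw : ∀ t, w t ∈ C)
    (hmin : ∀ t, 1 ≤ t →
      ∀ u ∈ C, ∑ τ ∈ Finset.Icc 1 t, ℓ τ (w (t + 1)) ≤ ∑ τ ∈ Finset.Icc 1 t, ℓ τ u) :
    ∑ t ∈ Finset.Icc 1 T, ‖w t - w (t + 1)‖ ≤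
        ∑ t ∈ Finset.Icc 1 T, 2 * L / ((2 * (t : ℝ) - 1) * α) ∧
      ∑ t ∈ Finset.Icc 1 T, 2 * L / ((2 * (t : ℝ) - 1) * α) ≤
        2 * L / α * (1 + Real.log T) :=
  stmt_4_general C hC α L hα hL T ℓ hsc hlip w hw hmin
end

section
/- In the FTRL setting with w_1 = argmin_{w∈C} R(w), the forward regret satisfies Σ_{t=1}^T [ℓ_t(w_{t+1}) − ℓ_t(w*)] ≤ (1/η)(R(w*) − R(w_1)) ≤ (1/η)·sup_{w∈C}‖∇R(w)‖_* · D, where D is the diameter of C in ‖·‖ and w* = argmin_{w∈C} Σ_{t=1}^T ℓ_t(w). -/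
/-! The leader at time `S + 1` beats every fixed comparator on the first `S` losses plus the
regulariser; unrolling this "be the leader" inequality by induction bounds the forward losses by
the comparator's losses plus `(R w* - R w₁) / η`. The gradient inequality for `R` at `w*` and
Cauchy–Schwarz bound `R w* - R w₁` by `G D`. -/

open Finset

namespace FTRL

variable {X : Type*} {C : Set X} {f : ℕ → X → ℝ} {r : X → ℝ} {w : ℕ → X}

theorem sum_forward_add_le (hw : ∀ t, w t ∈ C)
    (hleader : ∀ t, IsMinOn (fun u => ∑ τ ∈ Icc 1 t, f τ u + r u) C (w (t + 1)))
    (S : ℕ) {u : X} (hu : u ∈ C) :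
    ∑ t ∈ Icc 1 S, f t (w (t + 1)) + r (w 1) ≤ ∑ t ∈ Icc 1 S, f t u + r u := by
  induction S generalizing u with
  | zero => simpa using isMinOn_iff.mp (hleader 0) u hu
  | succ S ih =>
    have hsplit (g : ℕ → ℝ) : ∑ t ∈ Icc 1 (S + 1), g t = ∑ t ∈ Icc 1 S, g t + g (S + 1) :=
      sum_Icc_succ_top (Nat.le_add_left 1 S) g
    have hnext := ih (hw (S + 1 + 1))
    have hmin := isMinOn_iff.mp (hleader (S + 1)) u hu
    simp only [hsplit] at hmin ⊢
    linarith

end FTRL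

theorem sub_le_mul_of_le_add_inner {E : Type*} [NormedAddCommGroup E] [InnerProductSpace ℝ E]
    {a b G D : ℝ} {g x : E} (h : b + inner ℝ g x ≤ a) (hg : ‖g‖ ≤ G) (hx : ‖x‖ ≤ D) :
    b - a ≤ G * D := by
  have hinner : -(G * D) ≤ inner ℝ g x :=
    calc -(G * D) ≤ -(‖g‖ * ‖x‖) :=
          neg_le_neg (mul_le_mul hg hx (norm_nonneg x) ((norm_nonneg g).trans hg))
      _ ≤ inner ℝ g x := neg_le_of_abs_le (abs_real_inner_le_norm g x)
  linarith

theorem stmt_8_general {d : ℕ} (C : Set (EuclideanSpace ℝ (Fin d)))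
    (η G D : ℝ) (hη : 0 < η) (T : ℕ)
    (R : EuclideanSpace ℝ (Fin d) → ℝ)
    (R' : EuclideanSpace ℝ (Fin d) → EuclideanSpace ℝ (Fin d))
    (hRconv : ∀ u ∈ C, ∀ v ∈ C, R u ≥ R v + (inner ℝ (R' v) (u - v) : ℝ))
    (hG : ∀ u ∈ C, ‖R' u‖ ≤ G)
    (hD : ∀ x ∈ C, ∀ y ∈ C, ‖x - y‖ ≤ D)
    (ℓ : ℕ → EuclideanSpace ℝ (Fin d) → ℝ)
    (w : ℕ → EuclideanSpace ℝ (Fin d)) (hw : ∀ t, w t ∈ C)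
    (hw1 : ∀ u ∈ C, R (w 1) ≤ R u)
    (hmin : ∀ t, 1 ≤ t → ∀ u ∈ C,
      (∑ τ ∈ Finset.Icc 1 t, ℓ τ (w (t + 1))) + (1 / η) * R (w (t + 1)) ≤
        (∑ τ ∈ Finset.Icc 1 t, ℓ τ u) + (1 / η) * R u)
    (wstar : EuclideanSpace ℝ (Fin d)) (hwstar : wstar ∈ C) :
    ∑ t ∈ Finset.Icc 1 T, (ℓ t (w (t + 1)) - ℓ t wstar) ≤ (1 / η) * (R wstar - R (w 1)) ∧
      (1 / η) * (R wstar - R (w 1)) ≤ (1 / η) * G * D := by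
  have hη' : 0 ≤ 1 / η := by positivity
  have hleader (t : ℕ) :
      IsMinOn (fun u => ∑ τ ∈ Icc 1 t, ℓ τ u + (1 / η) * R u) C (w (t + 1)) := by
    refine isMinOn_iff.mpr fun u hu => ?_
    rcases t with _ | t
    · simpa using mul_le_mul_of_nonneg_left (hw1 u hu) hη'
    · exact hmin (t + 1) t.succ_pos u hu
  have hregret := FTRL.sum_forward_add_le hw hleader T hwstar
  have hRdiff : R wstar - R (w 1) ≤ G * D :=
    sub_le_mul_of_le_add_inner (hRconv (w 1) (hw 1) wstar hwstar) (hG wstar hwstar)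
      (hD (w 1) (hw 1) wstar hwstar)
  constructor
  · rw [sum_sub_distrib]
    linarith
  · rw [mul_assoc]
    exact mul_le_mul_of_nonneg_left hRdiff hη'

/-- FTRL forward regret: Σ[ℓ_t(w_{t+1}) − ℓ_t(w*)] ≤ (1/η)(R(w*) − R(w₁)) ≤ (1/η)·G·D,
where G bounds the (dual) norm of ∇R on C and D is the diameter of C. -/
theorem stmt_8 {d : ℕ} (C : Set (EuclideanSpace ℝ (Fin d)))
    (hC : Convex ℝ C) (hCcpt : IsCompact C)
    (η G D : ℝ) (hη : 0 < η) (T : ℕ)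
    (R : EuclideanSpace ℝ (Fin d) → ℝ)
    (R' : EuclideanSpace ℝ (Fin d) → EuclideanSpace ℝ (Fin d))
    (hRconv : ∀ u ∈ C, ∀ v ∈ C, R u ≥ R v + (inner ℝ (R' v) (u - v) : ℝ))
    (hG : ∀ u ∈ C, ‖R' u‖ ≤ G)
    (hD : ∀ x ∈ C, ∀ y ∈ C, ‖x - y‖ ≤ D)
    (ℓ : ℕ → EuclideanSpace ℝ (Fin d) → ℝ)
    (w : ℕ → EuclideanSpace ℝ (Fin d)) (hw : ∀ t, w t ∈ C)
    (hw1 : ∀ u ∈ C, R (w 1) ≤ R u)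
    (hmin : ∀ t, 1 ≤ t → ∀ u ∈ C,
      (∑ τ ∈ Finset.Icc 1 t, ℓ τ (w (t + 1))) + (1 / η) * R (w (t + 1)) ≤
        (∑ τ ∈ Finset.Icc 1 t, ℓ τ u) + (1 / η) * R u)
    (wstar : EuclideanSpace ℝ (Fin d)) (hwstar : wstar ∈ C)
    (hstar : ∀ u ∈ C, ∑ t ∈ Finset.Icc 1 T, ℓ t wstar ≤ ∑ t ∈ Finset.Icc 1 T, ℓ t u) :
    ∑ t ∈ Finset.Icc 1 T, (ℓ t (w (t + 1)) - ℓ t wstar) ≤ (1 / η) * (R wstar - R (w 1)) ∧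
      (1 / η) * (R wstar - R (w 1)) ≤ (1 / η) * G * D :=
  stmt_8_general C η G D hη T R R' hRconv hG hD ℓ w hw hw1 hmin wstar hwstar
end

section
/- Let r : C → ℝ be α-strongly convex and let g_1, g_2, … be vectors with ‖g_τ‖_* ≤ L. Define the RDA iterates (with β_t = 0): w_{t+1} = argmin_{w∈C} [Σ_{τ=1}^t ⟨g_τ, w⟩ + t·r(w)]. Then for every t ≥ 2, α‖w_t − w_{t+1}‖² ≤ ⟨(1/t)g_t − (1/(t(t−1)))Σ_{τ=1}^{t−1} g_τ, w_t − w_{t+1}⟩ ≤ (2L/t)·‖w_t − w_{t+1}‖, and hence ‖w_t − w_{t+1}‖ ≤ 2L/(αt). -/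
/-!
Dividing the two objectives by `t - 1` and `t` shows that `w_t` and `w_{t+1}` minimize
`⟪u, ·⟫ + r` and `⟪v, ·⟫ + r` over `C` for two vectors `u, v` whose difference is the drift
`(1/t) g_t - (1/(t(t-1))) ∑_{τ<t} g_τ`. A minimizer of an `α`-strongly convex function beats every
other point by `α/2 ‖x - y‖²`; adding this growth bound at both minimizers cancels `r` and gives
`α ‖w_t - w_{t+1}‖² ≤ ⟪v - u, w_t - w_{t+1}⟫`. Cauchy–Schwarz and `‖v - u‖ ≤ 2L/t` finish.
-/

open Filter Finset Set Topology
open scoped RealInnerProductSpace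

section Minimizer

variable {E : Type*} [NormedAddCommGroup E] [NormedSpace ℝ E] {s : Set E} {φ : ℝ → ℝ}
  {f : E → ℝ} {x y : E}

theorem UniformConvexOn.add_le_of_isMinOn (hf : UniformConvexOn s φ f) (hx : x ∈ s) (hy : y ∈ s)
    (hmin : IsMinOn f s x) : f x + φ ‖x - y‖ ≤ f y := by
  have hsegment : ∀ a ∈ Ioc (0 : ℝ) 1, f x + (1 - a) * φ ‖x - y‖ ≤ f y := by
    rintro a ⟨ha₀, ha₁⟩
    have hab : 1 - a + a = 1 := sub_add_cancel 1 a
    have hle := isMinOn_iff.1 hmin _ (hf.1 hx hy (sub_nonneg.2 ha₁) ha₀.le hab)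
    have hconv := hf.2 hx hy (sub_nonneg.2 ha₁) ha₀.le hab
    simp only [smul_eq_mul] at hconv
    refine le_of_mul_le_mul_left ?_ ha₀
    linear_combination hle + hconv
  have hlim : Tendsto (fun a : ℝ ↦ f x + (1 - a) * φ ‖x - y‖) (𝓝[>] 0)
      (𝓝 (f x + φ ‖x - y‖)) := by
    refine tendsto_nhdsWithin_of_tendsto_nhds ?_
    have hcont : Continuous fun a : ℝ ↦ f x + (1 - a) * φ ‖x - y‖ := by fun_prop
    simpa using hcont.tendsto 0
  exact le_of_tendsto hlim (mem_of_superset (Ioc_mem_nhdsGT zero_lt_one) hsegment)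

end Minimizer

section InnerProductSpace

variable {F : Type*} [NormedAddCommGroup F] [InnerProductSpace ℝ F] {s : Set F} {m : ℝ}
  {r : F → ℝ}

theorem StrongConvexOn.inner_add (hr : StrongConvexOn s m r) (v : F) :
    StrongConvexOn s m (fun w ↦ ⟪v, w⟫ + r w) := by
  simpa using! (uniformConvexOn_zero.2 ((innerₛₗ ℝ v).convexOn hr.1)).add hr

theorem StrongConvexOn.mul_norm_sub_sq_le_inner (hr : StrongConvexOn s m r) {u v x y : F}
    (hx : x ∈ s) (hy : y ∈ s) (hxmin : IsMinOn (fun w ↦ ⟪u, w⟫ + r w) s x)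
    (hymin : IsMinOn (fun w ↦ ⟪v, w⟫ + r w) s y) :
    m * ‖x - y‖ ^ 2 ≤ ⟪v - u, x - y⟫ := by
  have hx' := (hr.inner_add u).add_le_of_isMinOn hx hy hxmin
  have hy' := (hr.inner_add v).add_le_of_isMinOn hy hx hymin
  rw [norm_sub_rev] at hy'
  simp only [inner_sub_left, inner_sub_right] at hx' hy' ⊢
  linarith

theorem isMinOn_inner_add_of_smul {c : ℝ} (hc : 0 < c) {v x : F}
    (h : ∀ u ∈ s, ⟪v, x⟫ + c * r x ≤ ⟪v, u⟫ + c * r u) :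
    IsMinOn (fun w ↦ ⟪c⁻¹ • v, w⟫ + r w) s x := by
  have hscale : ∀ w, ⟪c⁻¹ • v, w⟫ + r w = c⁻¹ * (⟪v, w⟫ + c * r w) := by
    intro w
    rw [real_inner_smul_left]
    field_simp
  intro u hu
  simp only [mem_ofPred_eq, hscale]
  exact mul_le_mul_of_nonneg_left (h u hu) (inv_nonneg.2 hc.le)

end InnerProductSpace

theorem sum_Icc_one_eq_sum_Icc_sub_one_add {M : Type*} [AddCommMonoid M] (f : ℕ → M) {t : ℕ}
    (ht : 1 ≤ t) : ∑ τ ∈ Icc 1 t, f τ = ∑ τ ∈ Icc 1 (t - 1), f τ + f t := by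
  obtain ⟨n, rfl⟩ : ∃ n, t = n + 1 := ⟨t - 1, by omega⟩
  simp [sum_Icc_succ_top]

section Drift

variable {F : Type*} [NormedAddCommGroup F] [InnerProductSpace ℝ F] (g : ℕ → F) (t : ℕ)

noncomputable def rdaDrift : F :=
  (1 / (t : ℝ)) • g t - (1 / ((t : ℝ) * ((t : ℝ) - 1))) • ∑ τ ∈ Icc 1 (t - 1), g τ

variable {g t}

theorem rdaDrift_eq_sub (ht : 2 ≤ t) :
    rdaDrift g t = (t : ℝ)⁻¹ • (∑ τ ∈ Icc 1 (t - 1), g τ + g t)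
      - ((t : ℝ) - 1)⁻¹ • ∑ τ ∈ Icc 1 (t - 1), g τ := by
  have ht₀ : (t : ℝ) ≠ 0 := by positivity
  have ht₁ : (t : ℝ) - 1 ≠ 0 := by
    have : (2 : ℝ) ≤ t := by exact_mod_cast ht
    linarith
  unfold rdaDrift
  match_scalars <;> field_simp; ring

theorem norm_rdaDrift_le {L : ℝ} (hg : ∀ τ, ‖g τ‖ ≤ L) (ht : 2 ≤ t) :
    ‖rdaDrift g t‖ ≤ 2 * L / t := by
  have ht₁ : (0 : ℝ) < t - 1 := by
    have : (2 : ℝ) ≤ t := by exact_mod_cast ht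
    linarith
  have hsum : ‖∑ τ ∈ Icc 1 (t - 1), g τ‖ ≤ ((t : ℝ) - 1) * L := by
    calc ‖∑ τ ∈ Icc 1 (t - 1), g τ‖ ≤ ∑ τ ∈ Icc 1 (t - 1), L := norm_sum_le_of_le _ fun τ _ ↦ hg τ
      _ = ((t : ℝ) - 1) * L := by simp [Nat.cast_sub (by omega : 1 ≤ t)]
  calc ‖rdaDrift g t‖
      ≤ ‖(1 / (t : ℝ)) • g t‖ + ‖(1 / ((t : ℝ) * ((t : ℝ) - 1))) • ∑ τ ∈ Icc 1 (t - 1), g τ‖ :=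
        norm_sub_le _ _
    _ ≤ 1 / t * L + 1 / (t * (t - 1)) * ((t - 1) * L) := by
        rw [norm_smul, norm_smul, Real.norm_of_nonneg (by positivity),
          Real.norm_of_nonneg (by positivity)]
        gcongr
        exact hg t
    _ = 2 * L / t := by
        field_simp
        ring

end Drift

theorem le_div_of_mul_sq_le_mul {a b x : ℝ} (ha : 0 < a) (hb : 0 ≤ b) (hx : 0 ≤ x)
    (h : a * x ^ 2 ≤ b * x) : x ≤ b / a := by
  rw [le_div_iff₀ ha]
  rcases hx.eq_or_lt with rfl | hx
  · simpa using hb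
  · nlinarith

theorem stmt_10_general {d : ℕ} (C : Set (EuclideanSpace ℝ (Fin d)))
    (α L : ℝ) (hα : 0 < α) (hL : 0 ≤ L)
    (r : EuclideanSpace ℝ (Fin d) → ℝ) (hr : StrongConvexOn C α r)
    (g : ℕ → EuclideanSpace ℝ (Fin d)) (hg : ∀ τ, ‖g τ‖ ≤ L)
    (t : ℕ) (ht : 2 ≤ t)
    (wt wt1 : EuclideanSpace ℝ (Fin d)) (hwt : wt ∈ C) (hwt1 : wt1 ∈ C)
    (hmin_t : ∀ u ∈ C,
      (∑ τ ∈ Finset.Icc 1 (t - 1), (inner ℝ (g τ) wt : ℝ)) + ((t : ℝ) - 1) * r wt ≤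
        (∑ τ ∈ Finset.Icc 1 (t - 1), (inner ℝ (g τ) u : ℝ)) + ((t : ℝ) - 1) * r u)
    (hmin_t1 : ∀ u ∈ C,
      (∑ τ ∈ Finset.Icc 1 t, (inner ℝ (g τ) wt1 : ℝ)) + (t : ℝ) * r wt1 ≤
        (∑ τ ∈ Finset.Icc 1 t, (inner ℝ (g τ) u : ℝ)) + (t : ℝ) * r u) :
    α * ‖wt - wt1‖ ^ 2 ≤
        (inner ℝ ((1 / (t : ℝ)) • g t -
          (1 / ((t : ℝ) * ((t : ℝ) - 1))) • ∑ τ ∈ Finset.Icc 1 (t - 1), g τ) (wt - wt1) : ℝ) ∧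
      (inner ℝ ((1 / (t : ℝ)) • g t -
          (1 / ((t : ℝ) * ((t : ℝ) - 1))) • ∑ τ ∈ Finset.Icc 1 (t - 1), g τ) (wt - wt1) : ℝ) ≤
        2 * L / (t : ℝ) * ‖wt - wt1‖ ∧
      ‖wt - wt1‖ ≤ 2 * L / (α * (t : ℝ)) := by
  have ht' : (2 : ℝ) ≤ t := by exact_mod_cast ht
  simp only [← sum_inner] at hmin_t hmin_t1
  rw [sum_Icc_one_eq_sum_Icc_sub_one_add g (by omega)] at hmin_t1
  have hgrowth : α * ‖wt - wt1‖ ^ 2 ≤ ⟪rdaDrift g t, wt - wt1⟫ := by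
    rw [rdaDrift_eq_sub ht]
    exact hr.mul_norm_sub_sq_le_inner hwt hwt1
      (isMinOn_inner_add_of_smul (by linarith) hmin_t)
      (isMinOn_inner_add_of_smul (by linarith) hmin_t1)
  have hcs : ⟪rdaDrift g t, wt - wt1⟫ ≤ 2 * L / t * ‖wt - wt1‖ :=
    (real_inner_le_norm _ _).trans <| by gcongr; exact norm_rdaDrift_le hg ht
  refine ⟨hgrowth, hcs, ?_⟩
  rw [mul_comm α, ← div_div]
  exact le_div_of_mul_sq_le_mul hα (by positivity) (norm_nonneg _) (hgrowth.trans hcs)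

/-- RDA (β_t = 0) per-step stability for an α-strongly convex regularizer. -/
theorem stmt_10 {d : ℕ} (C : Set (EuclideanSpace ℝ (Fin d)))
    (hC : Convex ℝ C) (hCcpt : IsCompact C)
    (α L : ℝ) (hα : 0 < α) (hL : 0 ≤ L)
    (r : EuclideanSpace ℝ (Fin d) → ℝ) (hr : StrongConvexOn C α r)
    (g : ℕ → EuclideanSpace ℝ (Fin d)) (hg : ∀ τ, ‖g τ‖ ≤ L)
    (t : ℕ) (ht : 2 ≤ t)
    (wt wt1 : EuclideanSpace ℝ (Fin d)) (hwt : wt ∈ C) (hwt1 : wt1 ∈ C)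
    (hmin_t : ∀ u ∈ C,
      (∑ τ ∈ Finset.Icc 1 (t - 1), (inner ℝ (g τ) wt : ℝ)) + ((t : ℝ) - 1) * r wt ≤
        (∑ τ ∈ Finset.Icc 1 (t - 1), (inner ℝ (g τ) u : ℝ)) + ((t : ℝ) - 1) * r u)
    (hmin_t1 : ∀ u ∈ C,
      (∑ τ ∈ Finset.Icc 1 t, (inner ℝ (g τ) wt1 : ℝ)) + (t : ℝ) * r wt1 ≤
        (∑ τ ∈ Finset.Icc 1 t, (inner ℝ (g τ) u : ℝ)) + (t : ℝ) * r u) :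
    α * ‖wt - wt1‖ ^ 2 ≤
        (inner ℝ ((1 / (t : ℝ)) • g t -
          (1 / ((t : ℝ) * ((t : ℝ) - 1))) • ∑ τ ∈ Finset.Icc 1 (t - 1), g τ) (wt - wt1) : ℝ) ∧
      (inner ℝ ((1 / (t : ℝ)) • g t -
          (1 / ((t : ℝ) * ((t : ℝ) - 1))) • ∑ τ ∈ Finset.Icc 1 (t - 1), g τ) (wt - wt1) : ℝ) ≤
        2 * L / (t : ℝ) * ‖wt - wt1‖ ∧
      ‖wt - wt1‖ ≤ 2 * L / (α * (t : ℝ)) :=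
  stmt_10_general C α L hα hL r hr g hg t ht wt wt1 hwt hwt1 hmin_t hmin_t1
end

section
/- Approximate FTRL stability: suppose R is 1-strongly convex on C, each ℓ_t is L-Lipschitz and convex, exact FTRL iterates w*_t satisfy ‖w*_t − w*_{t+1}‖ ≤ Lη, and approximate iterates w_t satisfy S_{t−1}(w_t) ≤ S_{t−1}(w*_t) + δ_t where S_t(w) = Σ_{τ≤t} η ℓ_τ(w) + R(w). Then ‖w_t − w_{t+1}‖ ≤ √(2δ_t) + Lη + √(2δ_{t+1}), and hence Σ_{t=1}^T ‖w_t − w_{t+1}‖ ≤ LTη + Σ_{t=1}^T (√(2δ_t) + √(2δ_{t+1})). -/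
/-!
Each objective `S t` is `η`-weighted convex losses plus a `1`-strongly convex regulariser, hence
`1`-strongly convex, so it grows quadratically away from its minimiser:
`‖u - w*_{t+1}‖² / 2 ≤ S t u - S t w*_{t+1}`. A `δ`-approximate minimiser is therefore within
`√(2δ)` of the exact one, and the triangle inequality through `w*_t` and `w*_{t+1}` combines this
with the stability `‖w*_t - w*_{t+1}‖ ≤ Lη` of the exact iterates. Summing gives the second bound.
-/

open Filter Topology

section StrongConvexity

variable {E : Type*} [NormedAddCommGroup E] [NormedSpace ℝ E] {s : Set E} {f : E → ℝ}

lemma ConvexOn.finset_sum {ι : Type*} (F : Finset ι) {g : ι → E → ℝ} (hs : Convex ℝ s)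
    (hg : ∀ i ∈ F, ConvexOn ℝ s (g i)) : ConvexOn ℝ s (∑ i ∈ F, g i) :=
  Finset.sum_induction _ (ConvexOn ℝ s) (fun _ _ => ConvexOn.add) (convexOn_const 0 hs) hg

lemma ConvexOn.add_strongConvexOn {g : E → ℝ} {m : ℝ} (hf : ConvexOn ℝ s f)
    (hg : StrongConvexOn s m g) : StrongConvexOn s m (f + g) := by
  simpa [StrongConvexOn] using (uniformConvexOn_zero.mpr hf).add hg

lemma StrongConvexOn.sq_norm_sub_le_of_isMinOn {m : ℝ} (hf : StrongConvexOn s m f) {x y : E}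
    (hx : x ∈ s) (hy : y ∈ s) (hmin : IsMinOn f s x) :
    m / 2 * ‖y - x‖ ^ 2 ≤ f y - f x := by
  set c := m / 2 * ‖y - x‖ ^ 2 with hc
  -- Compare `f x` with `f` at the point `a • y + (1 - a) • x` of the segment, then let `a → 0⁺`.
  have hseg : ∀ a ∈ Set.Ioc (0 : ℝ) 1, (1 - a) * c ≤ f y - f x := by
    rintro a ⟨ha, ha1⟩
    have hconv := hf.2 hy hx ha.le (sub_nonneg.mpr ha1) (add_sub_cancel a 1)
    have hle : f x ≤ f (a • y + (1 - a) • x) :=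
      hmin (hf.1 hy hx ha.le (sub_nonneg.mpr ha1) (add_sub_cancel a 1))
    simp only [smul_eq_mul, ← hc] at hconv
    have : a * ((1 - a) * c) ≤ a * (f y - f x) := by linarith
    exact le_of_mul_le_mul_left this ha
  have hlim : Tendsto (fun a : ℝ => (1 - a) * c) (𝓝[>] 0) (𝓝 c) := by
    have : Tendsto (fun a : ℝ => (1 - a) * c) (𝓝 0) (𝓝 ((1 - 0) * c)) :=
      Continuous.tendsto (by fun_prop) 0
    simpa using this.mono_left nhdsWithin_le_nhds
  exact le_of_tendsto hlim (eventually_of_mem (Ioc_mem_nhdsGT one_pos) hseg)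

lemma StrongConvexOn.norm_sub_le_sqrt_of_isMinOn (hf : StrongConvexOn s 1 f) {x y : E}
    (hx : x ∈ s) (hy : y ∈ s) (hmin : IsMinOn f s x) {δ : ℝ} (hfy : f y ≤ f x + δ) :
    ‖y - x‖ ≤ √(2 * δ) := by
  have := hf.sq_norm_sub_le_of_isMinOn hx hy hmin
  exact Real.le_sqrt_of_sq_le (by linarith)

end StrongConvexity

lemma Finset.sum_le_card_mul_add_sum {ι : Type*} (F : Finset ι) {a b : ι → ℝ} (c : ℝ)
    (h : ∀ i ∈ F, a i ≤ c + b i) : ∑ i ∈ F, a i ≤ F.card * c + ∑ i ∈ F, b i := by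
  calc ∑ i ∈ F, a i ≤ ∑ i ∈ F, (c + b i) := Finset.sum_le_sum h
    _ = F.card * c + ∑ i ∈ F, b i := by rw [Finset.sum_add_distrib, Finset.sum_const, nsmul_eq_mul]

theorem stmt_13_general {d : ℕ} (C : Set (EuclideanSpace ℝ (Fin d)))
    (L η : ℝ) (hη : 0 < η) (T : ℕ)
    (δ : ℕ → ℝ)
    (R : EuclideanSpace ℝ (Fin d) → ℝ) (hR : StrongConvexOn C 1 R)
    (ℓ : ℕ → EuclideanSpace ℝ (Fin d) → ℝ)
    (hconv : ∀ t, ConvexOn ℝ C (ℓ t))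
    (S : ℕ → EuclideanSpace ℝ (Fin d) → ℝ)
    (hS : ∀ t x, S t x = (∑ τ ∈ Finset.Icc 1 t, η * ℓ τ x) + R x)
    -- exact FTRL iterates
    (wex : ℕ → EuclideanSpace ℝ (Fin d)) (hwex : ∀ t, wex t ∈ C)
    (hmin : ∀ t, ∀ u ∈ C, S t (wex (t + 1)) ≤ S t u)
    (hexstab : ∀ t, 1 ≤ t → ‖wex t - wex (t + 1)‖ ≤ L * η)
    -- approximate iterates
    (w : ℕ → EuclideanSpace ℝ (Fin d)) (hwmem : ∀ t, w t ∈ C)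
    (happrox : ∀ t, S t (w (t + 1)) ≤ S t (wex (t + 1)) + δ (t + 1)) :
    (∀ t, 1 ≤ t →
        ‖w t - w (t + 1)‖ ≤ Real.sqrt (2 * δ t) + L * η + Real.sqrt (2 * δ (t + 1))) ∧
      ∑ t ∈ Finset.Icc 1 T, ‖w t - w (t + 1)‖ ≤
        L * T * η + ∑ t ∈ Finset.Icc 1 T, (Real.sqrt (2 * δ t) + Real.sqrt (2 * δ (t + 1))) := by
  have hSconv (t : ℕ) : StrongConvexOn C 1 (S t) := by
    rw [show S t = (∑ τ ∈ Finset.Icc 1 t, fun x => η * ℓ τ x) + R by ext; simp [hS]]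
    refine (ConvexOn.finset_sum _ hR.1 fun τ _ => ?_).add_strongConvexOn hR
    exact (hconv τ).smul hη.le
  have hdist (t : ℕ) : dist (w (t + 1)) (wex (t + 1)) ≤ √(2 * δ (t + 1)) := by
    rw [dist_eq_norm]
    exact (hSconv t).norm_sub_le_sqrt_of_isMinOn (hwex _) (hwmem _) (hmin t) (happrox t)
  have hstep (t : ℕ) (ht : 1 ≤ t) : ‖w t - w (t + 1)‖ ≤ √(2 * δ t) + L * η + √(2 * δ (t + 1)) := by
    obtain ⟨s, rfl⟩ : ∃ s, t = s + 1 := ⟨t - 1, by omega⟩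
    calc ‖w (s + 1) - w (s + 1 + 1)‖
        ≤ dist (w (s + 1)) (wex (s + 1)) + dist (wex (s + 1)) (wex (s + 1 + 1))
            + dist (wex (s + 1 + 1)) (w (s + 1 + 1)) := by
          rw [← dist_eq_norm]; exact dist_triangle4 _ _ _ _
      _ ≤ _ := by
          rw [dist_comm (wex (s + 1 + 1)), dist_eq_norm (wex (s + 1))]
          gcongr
          exacts [hdist s, hexstab _ ht, hdist (s + 1)]
  refine ⟨hstep, ?_⟩
  calc ∑ t ∈ Finset.Icc 1 T, ‖w t - w (t + 1)‖
      ≤ (Finset.Icc 1 T).card * (L * η) + ∑ t ∈ Finset.Icc 1 T, (√(2 * δ t) + √(2 * δ (t + 1))) :=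
        Finset.sum_le_card_mul_add_sum _ _
          fun t ht => (hstep t (Finset.mem_Icc.mp ht).1).trans_eq (by ring)
    _ = _ := by rw [Nat.card_Icc, Nat.add_sub_cancel]; ring

/-- Approximate FTRL stability: per-step bound √(2δ_t) + Lη + √(2δ_{t+1}) and the
resulting cumulative stability bound. -/
theorem stmt_13 {d : ℕ} (C : Set (EuclideanSpace ℝ (Fin d)))
    (hC : Convex ℝ C) (hCcpt : IsCompact C)
    (L η : ℝ) (hη : 0 < η) (hL : 0 ≤ L) (T : ℕ)
    (δ : ℕ → ℝ) (hδ : ∀ t, 0 ≤ δ t)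
    (R : EuclideanSpace ℝ (Fin d) → ℝ) (hR : StrongConvexOn C 1 R)
    (ℓ : ℕ → EuclideanSpace ℝ (Fin d) → ℝ)
    (hconv : ∀ t, ConvexOn ℝ C (ℓ t))
    (hlip : ∀ t, ∀ x ∈ C, ∀ y ∈ C, |ℓ t x - ℓ t y| ≤ L * ‖x - y‖)
    (S : ℕ → EuclideanSpace ℝ (Fin d) → ℝ)
    (hS : ∀ t x, S t x = (∑ τ ∈ Finset.Icc 1 t, η * ℓ τ x) + R x)
    -- exact FTRL iterates
    (wex : ℕ → EuclideanSpace ℝ (Fin d)) (hwex : ∀ t, wex t ∈ C)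
    (hmin : ∀ t, ∀ u ∈ C, S t (wex (t + 1)) ≤ S t u)
    (hexstab : ∀ t, 1 ≤ t → ‖wex t - wex (t + 1)‖ ≤ L * η)
    -- approximate iterates
    (w : ℕ → EuclideanSpace ℝ (Fin d)) (hwmem : ∀ t, w t ∈ C)
    (happrox : ∀ t, S t (w (t + 1)) ≤ S t (wex (t + 1)) + δ (t + 1)) :
    (∀ t, 1 ≤ t →
        ‖w t - w (t + 1)‖ ≤ Real.sqrt (2 * δ t) + L * η + Real.sqrt (2 * δ (t + 1))) ∧
      ∑ t ∈ Finset.Icc 1 T, ‖w t - w (t + 1)‖ ≤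
        L * T * η + ∑ t ∈ Finset.Icc 1 T, (Real.sqrt (2 * δ t) + Real.sqrt (2 * δ (t + 1))) :=
  stmt_13_general C L η hη T δ R hR ℓ hconv S hS wex hwex hmin hexstab w hwmem happrox
end

section
/- Batching preserves bounded regret: let A be an online algorithm with regret R_A(n) on any sequence of n losses from a class of L-Lipschitz functions on a set C of diameter D. Construct A′ that plays in batches of size B, feeding A the average g_i of each batch. Then the regret of A′ over T = mB rounds satisfies Σ_{t=1}^T [ℓ_t(w_t′) − ℓ_t(w*)] ≤ B·R_A(⌊T/B⌋) + L·D·B, and its cumulative stability satisfies Σ_{t=1}^T ‖w_t′ − w_{t+1}′‖ ≤ (T/B)·D. -/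
/-!
While a batch lasts, A′ plays one iterate v i of A, so the losses of batch i sum to exactly
B times the averaged loss g i at v i, and the regret of A′ is B times the regret of A.
The iterate of A′ changes only at the last round of each batch, by at most the diameter D,
which happens T / B times.
-/

open Finset

theorem sum_Icc_mul_eq_sum_blocks {M : Type*} [AddCommMonoid M] (f : ℕ → M) (B m : ℕ) :
    ∑ t ∈ Icc 1 (m * B), f t = ∑ i ∈ Icc 1 m, ∑ t ∈ Icc ((i - 1) * B + 1) (i * B), f t := by
  simp only [Icc_add_one_left_eq_Ioc]
  rw [show Icc 1 (m * B) = Ioc 0 (m * B) from Icc_add_one_left_eq_Ioc 0 _]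
  induction m with
  | zero => simp
  | succ m ih =>
    rw [sum_Icc_succ_top (by omega), ← ih, ← sum_Ioc_consecutive f (Nat.zero_le _)
      (Nat.mul_le_mul_right B m.le_succ), Nat.add_sub_cancel]

theorem sub_one_div_add_one_eq {B i t : ℕ} (hi : 1 ≤ i) (hlo : (i - 1) * B + 1 ≤ t)
    (hhi : t ≤ i * B) : (t - 1) / B + 1 = i := by
  rw [Nat.div_eq_of_lt_le (k := i - 1) (by omega) (by rw [Nat.sub_add_cancel hi]; omega),
    Nat.sub_add_cancel hi]

theorem sum_batched_regret_eq {E : Type*} {B : ℕ} (hB : B ≠ 0) (m : ℕ) (ℓ g : ℕ → E → ℝ)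
    (hg : ∀ i x, g i x = (1 / (B : ℝ)) * ∑ t ∈ Icc ((i - 1) * B + 1) (i * B), ℓ t x)
    (v w' : ℕ → E) (hw' : ∀ t, 1 ≤ t → t ≤ m * B → w' t = v ((t - 1) / B + 1)) (w : E) :
    ∑ t ∈ Icc 1 (m * B), (ℓ t (w' t) - ℓ t w) = B * ∑ i ∈ Icc 1 m, (g i (v i) - g i w) := by
  rw [sum_Icc_mul_eq_sum_blocks, mul_sum]
  refine sum_congr rfl fun i hi => ?_
  obtain ⟨hi1, him⟩ := mem_Icc.mp hi
  have hplay : ∀ t ∈ Icc ((i - 1) * B + 1) (i * B), w' t = v i := fun t ht => by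
    obtain ⟨hlo, hhi⟩ := mem_Icc.mp ht
    rw [hw' t (by omega) (hhi.trans (Nat.mul_le_mul_right B him)),
      sub_one_div_add_one_eq hi1 hlo hhi]
  rw [sum_congr rfl fun t ht => by rw [hplay t ht], sum_sub_distrib, hg, hg]
  field_simp

theorem sum_norm_sub_succ_le_of_batched {E : Type*} [SeminormedAddCommGroup E] {C : Set E}
    {D : ℝ} (hD : ∀ x ∈ C, ∀ y ∈ C, ‖x - y‖ ≤ D) {B : ℕ} (hB : 0 < B) (m : ℕ)
    (v w' : ℕ → E) (hv : ∀ i, v i ∈ C)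
    (hw' : ∀ t, 1 ≤ t → t ≤ m * B + 1 → w' t = v ((t - 1) / B + 1)) :
    ∑ t ∈ Icc 1 (m * B), ‖w' t - w' (t + 1)‖ ≤ m * D := by
  rw [sum_Icc_mul_eq_sum_blocks]
  suffices ∀ i ∈ Icc 1 m, ∑ t ∈ Icc ((i - 1) * B + 1) (i * B), ‖w' t - w' (t + 1)‖ ≤ D by
    simpa using sum_le_sum this
  intro i hi
  obtain ⟨hi1, him⟩ := mem_Icc.mp hi
  have hiB : i * B ≤ m * B := Nat.mul_le_mul_right B him
  have hstep : (i - 1) * B + B = i * B := by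
    rw [← Nat.succ_mul, Nat.succ_eq_add_one, Nat.sub_add_cancel hi1]
  have hplay : ∀ t, (i - 1) * B + 1 ≤ t → t ≤ i * B → w' t = v i := fun t hlo hhi => by
    rw [hw' t (by omega) (by omega), sub_one_div_add_one_eq hi1 hlo hhi]
  obtain ⟨k, hk⟩ : ∃ k, i * B = k + 1 := ⟨i * B - 1, by omega⟩
  have hmove : ∀ t ∈ Icc ((i - 1) * B + 1) k, ‖w' t - w' (t + 1)‖ = 0 := fun t ht => by
    obtain ⟨hlo, hhi⟩ := mem_Icc.mp ht
    rw [hplay t hlo (by omega), hplay (t + 1) (by omega) (by omega), sub_self, norm_zero]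
  have hnext : w' (k + 1 + 1) = v (i + 1) := by
    rw [hw' _ (by omega) (by omega), ← hk, Nat.add_sub_cancel, Nat.mul_div_cancel i hB]
  rw [hk, sum_Icc_succ_top (by omega), sum_eq_zero hmove, zero_add,
    hplay _ (by omega) hk.ge, hnext]
  exact hD _ (hv i) _ (hv (i + 1))

theorem stmt_17_general {d : ℕ} (C : Set (EuclideanSpace ℝ (Fin d)))
    (L D RA : ℝ) (hL : 0 ≤ L) (hD : ∀ x ∈ C, ∀ y ∈ C, ‖x - y‖ ≤ D)
    (T m B : ℕ) (hB : 1 ≤ B) (hT : T = m * B)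
    (ℓ : ℕ → EuclideanSpace ℝ (Fin d) → ℝ)
    -- averaged batch losses fed to the base algorithm A
    (g : ℕ → EuclideanSpace ℝ (Fin d) → ℝ)
    (hg : ∀ i x, g i x = (1 / (B : ℝ)) * ∑ t ∈ Finset.Icc ((i - 1) * B + 1) (i * B), ℓ t x)
    -- iterates of the base algorithm A on the averaged losses
    (v : ℕ → EuclideanSpace ℝ (Fin d)) (hv : ∀ i, v i ∈ C)
    (wstar : EuclideanSpace ℝ (Fin d))
    -- A has regret at most RA on the m averaged losses
    (hRA : ∑ i ∈ Finset.Icc 1 m, (g i (v i) - g i wstar) ≤ RA)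
    -- iterates of the batched algorithm A'
    (w' : ℕ → EuclideanSpace ℝ (Fin d))
    (hw' : ∀ t, 1 ≤ t → t ≤ T + 1 → w' t = v ((t - 1) / B + 1)) :
    ∑ t ∈ Finset.Icc 1 T, (ℓ t (w' t) - ℓ t wstar) ≤ (B : ℝ) * RA + L * D * B ∧
      ∑ t ∈ Finset.Icc 1 T, ‖w' t - w' (t + 1)‖ ≤ ((T : ℝ) / B) * D := by
  subst hT
  have hB0 : (B : ℝ) ≠ 0 := by positivity
  have hD0 : 0 ≤ D := (norm_nonneg _).trans (hD _ (hv 0) _ (hv 0))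
  constructor
  · rw [sum_batched_regret_eq (by omega) m ℓ g hg v w' (fun t h1 h2 => hw' t h1 (by omega))]
    exact (mul_le_mul_of_nonneg_left hRA B.cast_nonneg).trans
      (le_add_of_nonneg_right (by positivity))
  · rw [Nat.cast_mul, mul_div_cancel_right₀ _ hB0]
    exact sum_norm_sub_succ_le_of_batched hD hB m v w' hv hw'

/-- Batching preserves bounded regret: if A' plays in batches of size B, feeding the
base algorithm A the averaged loss of each batch, then over T = m·B rounds the regret
of A' is at most B·R_A(T/B) + L·D·B and its cumulative stability is at most (T/B)·D. -/
theorem stmt_17 {d : ℕ} (C : Set (EuclideanSpace ℝ (Fin d)))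
    (L D RA : ℝ) (hL : 0 ≤ L) (hD : ∀ x ∈ C, ∀ y ∈ C, ‖x - y‖ ≤ D)
    (T m B : ℕ) (hB : 1 ≤ B) (hm : 1 ≤ m) (hT : T = m * B)
    (ℓ : ℕ → EuclideanSpace ℝ (Fin d) → ℝ)
    (hlip : ∀ t, ∀ x ∈ C, ∀ y ∈ C, |ℓ t x - ℓ t y| ≤ L * ‖x - y‖)
    -- averaged batch losses fed to the base algorithm A
    (g : ℕ → EuclideanSpace ℝ (Fin d) → ℝ)
    (hg : ∀ i x, g i x = (1 / (B : ℝ)) * ∑ t ∈ Finset.Icc ((i - 1) * B + 1) (i * B), ℓ t x)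
    -- iterates of the base algorithm A on the averaged losses
    (v : ℕ → EuclideanSpace ℝ (Fin d)) (hv : ∀ i, v i ∈ C)
    (wstar : EuclideanSpace ℝ (Fin d)) (hwstar : wstar ∈ C)
    -- A has regret at most RA on the m averaged losses
    (hRA : ∑ i ∈ Finset.Icc 1 m, (g i (v i) - g i wstar) ≤ RA)
    -- iterates of the batched algorithm A'
    (w' : ℕ → EuclideanSpace ℝ (Fin d))
    (hw' : ∀ t, 1 ≤ t → t ≤ T + 1 → w' t = v ((t - 1) / B + 1)) :
    ∑ t ∈ Finset.Icc 1 T, (ℓ t (w' t) - ℓ t wstar) ≤ (B : ℝ) * RA + L * D * B ∧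
      ∑ t ∈ Finset.Icc 1 T, ‖w' t - w' (t + 1)‖ ≤ ((T : ℝ) / B) * D :=
  stmt_17_general C L D RA hL hD T m B hB hT ℓ g hg v hv wstar hRA w' hw'
end

section
/- COMiD stability: let the iterates satisfy η_t(⟨g_t, w_t⟩ + r(w_t)) ≥ D_R(w_{t+1}, w_t) + η_t(⟨g_t, w_{t+1}⟩ + r(w_{t+1})) with D_R(u,v) ≥ (1/2)‖u−v‖² and ‖g_t‖_* ≤ L, and r(w_1) ≤ r(w_{T+1}) where w_1 minimizes r over C. Then Σ_{t=1}^T ‖w_t − w_{t+1}‖ ≤ 2L Σ_{t=1}^T η_t. -/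
/-!
Each proximal step gives `‖w_t - w_{t+1}‖² / η_t ≤ 2L ‖w_t - w_{t+1}‖ + 2 (r w_t - r w_{t+1})`,
by bounding the linear term with Cauchy–Schwarz, `⟨g_t, w_t - w_{t+1}⟩ ≤ L ‖w_t - w_{t+1}‖`.
Summing, the `r`-terms telescope to `2 (r w_1 - r w_{T+1}) ≤ 0`, so with `S = Σ ‖w_t - w_{t+1}‖`
we get `Σ ‖w_t - w_{t+1}‖² / η_t ≤ 2L S`. Sedrakyan's form of Cauchy–Schwarz,
`S² ≤ (Σ ‖w_t - w_{t+1}‖² / η_t) (Σ η_t)`, then yields `S ≤ 2L Σ η_t`.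
-/

open Finset

theorem Finset.sum_Icc_sub_succ {M : Type*} [AddCommGroup M] (f : ℕ → M) {m n : ℕ}
    (hmn : m ≤ n + 1) : ∑ i ∈ Icc m n, (f i - f (i + 1)) = f m - f (n + 1) := by
  rcases hmn.lt_or_eq with hlt | rfl
  · rw [← neg_sub (f (n + 1)), ← sum_Icc_sub (by omega), ← sum_neg_distrib]
    simp only [neg_sub]
  · simp

theorem Finset.sum_le_mul_sum_of_sum_sq_div_le {ι : Type*} (s : Finset ι) {a η : ι → ℝ} {c : ℝ}
    (hc : 0 ≤ c) (ha : ∀ i ∈ s, 0 ≤ a i) (hη : ∀ i ∈ s, 0 < η i)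
    (h : ∑ i ∈ s, a i ^ 2 / η i ≤ c * ∑ i ∈ s, a i) :
    ∑ i ∈ s, a i ≤ c * ∑ i ∈ s, η i := by
  have hsedrakyan : (∑ i ∈ s, a i) ^ 2 ≤ (∑ i ∈ s, a i ^ 2 / η i) * ∑ i ∈ s, η i :=
    sum_sq_le_sum_mul_sum_of_sq_le_mul s
      (fun i hi => div_nonneg (sq_nonneg _) (hη i hi).le) (fun i hi => (hη i hi).le)
      (fun i hi => (div_mul_cancel₀ _ (hη i hi).ne').ge)
  rcases (sum_nonneg ha).eq_or_lt with hS | hS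
  · rw [← hS]
    exact mul_nonneg hc (sum_nonneg fun i hi => (hη i hi).le)
  · refine le_of_mul_le_mul_right ?_ hS
    calc (∑ i ∈ s, a i) * ∑ i ∈ s, a i
        ≤ (∑ i ∈ s, a i ^ 2 / η i) * ∑ i ∈ s, η i := by rw [← sq]; exact hsedrakyan
      _ ≤ (c * ∑ i ∈ s, a i) * ∑ i ∈ s, η i :=
          mul_le_mul_of_nonneg_right h (sum_nonneg fun i hi => (hη i hi).le)
      _ = c * (∑ i ∈ s, η i) * ∑ i ∈ s, a i := by ring

theorem norm_sub_sq_div_le_of_proximal_step {E : Type*} [NormedAddCommGroup E]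
    [InnerProductSpace ℝ E] {g v u : E} {L η D rv ru : ℝ} (hη : 0 < η) (hg : ‖g‖ ≤ L)
    (hD : 1 / 2 * ‖u - v‖ ^ 2 ≤ D)
    (hstep : D + η * (inner ℝ g u + ru) ≤ η * (inner ℝ g v + rv)) :
    ‖v - u‖ ^ 2 / η ≤ 2 * L * ‖v - u‖ + 2 * (rv - ru) := by
  have hlin : inner ℝ g v - inner ℝ g u ≤ L * ‖v - u‖ :=
    calc inner ℝ g v - inner ℝ g u = inner ℝ g (v - u) := (inner_sub_right _ _ _).symm
      _ ≤ ‖g‖ * ‖v - u‖ := real_inner_le_norm _ _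
      _ ≤ L * ‖v - u‖ := mul_le_mul_of_nonneg_right hg (norm_nonneg _)
  rw [norm_sub_rev] at hD
  rw [div_le_iff₀ hη]
  nlinarith [mul_le_mul_of_nonneg_left hlin hη.le]

theorem stmt_18_general {d : ℕ}
    (L : ℝ) (T : ℕ)
    (η : ℕ → ℝ) (hη : ∀ t, 0 < η t)
    (r : EuclideanSpace ℝ (Fin d) → ℝ)
    (g : ℕ → EuclideanSpace ℝ (Fin d)) (hg : ∀ t, ‖g t‖ ≤ L)
    (DR : EuclideanSpace ℝ (Fin d) → EuclideanSpace ℝ (Fin d) → ℝ)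
    (hDR : ∀ u v, DR u v ≥ 1 / 2 * ‖u - v‖ ^ 2)
    (w : ℕ → EuclideanSpace ℝ (Fin d))
    (hiter : ∀ t, 1 ≤ t → t ≤ T →
      η t * ((inner ℝ (g t) (w t) : ℝ) + r (w t)) ≥
        DR (w (t + 1)) (w t) + η t * ((inner ℝ (g t) (w (t + 1)) : ℝ) + r (w (t + 1))))
    (hr1 : r (w 1) ≤ r (w (T + 1))) :
    ∑ t ∈ Finset.Icc 1 T, ‖w t - w (t + 1)‖ ≤ 2 * L * ∑ t ∈ Finset.Icc 1 T, η t := by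
  have hL : 0 ≤ L := (norm_nonneg _).trans (hg 0)
  refine sum_le_mul_sum_of_sum_sq_div_le _ (by positivity) (fun t _ => norm_nonneg _)
    (fun t _ => hη t) ?_
  calc ∑ t ∈ Icc 1 T, ‖w t - w (t + 1)‖ ^ 2 / η t
      ≤ ∑ t ∈ Icc 1 T, (2 * L * ‖w t - w (t + 1)‖ + 2 * (r (w t) - r (w (t + 1)))) :=
        sum_le_sum fun t ht =>
          have ht := mem_Icc.mp ht
          norm_sub_sq_div_le_of_proximal_step (hη t) (hg t) (hDR _ _) (hiter t ht.1 ht.2)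
    _ = 2 * L * ∑ t ∈ Icc 1 T, ‖w t - w (t + 1)‖ + 2 * (r (w 1) - r (w (T + 1))) := by
        rw [sum_add_distrib, ← mul_sum, ← mul_sum, sum_Icc_sub_succ _ (by omega)]
    _ ≤ 2 * L * ∑ t ∈ Icc 1 T, ‖w t - w (t + 1)‖ := by linarith

/-- COMiD cumulative stability bound: Σ‖w_t − w_{t+1}‖ ≤ 2L Σ η_t. -/
theorem stmt_18 {d : ℕ} (C : Set (EuclideanSpace ℝ (Fin d))) (hC : Convex ℝ C)
    (L : ℝ) (hL : 0 ≤ L) (T : ℕ)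
    (η : ℕ → ℝ) (hη : ∀ t, 0 < η t)
    (r : EuclideanSpace ℝ (Fin d) → ℝ)
    (g : ℕ → EuclideanSpace ℝ (Fin d)) (hg : ∀ t, ‖g t‖ ≤ L)
    (DR : EuclideanSpace ℝ (Fin d) → EuclideanSpace ℝ (Fin d) → ℝ)
    (hDR : ∀ u v, DR u v ≥ 1 / 2 * ‖u - v‖ ^ 2)
    (w : ℕ → EuclideanSpace ℝ (Fin d)) (hw : ∀ t, w t ∈ C)
    (hiter : ∀ t, 1 ≤ t → t ≤ T →
      η t * ((inner ℝ (g t) (w t) : ℝ) + r (w t)) ≥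
        DR (w (t + 1)) (w t) + η t * ((inner ℝ (g t) (w (t + 1)) : ℝ) + r (w (t + 1))))
    (hw1 : ∀ u ∈ C, r (w 1) ≤ r u)
    (hr1 : r (w 1) ≤ r (w (T + 1))) :
    ∑ t ∈ Finset.Icc 1 T, ‖w t - w (t + 1)‖ ≤ 2 * L * ∑ t ∈ Finset.Icc 1 T, η t :=
  stmt_18_general L T η hη r g hg DR hDR w hiter hr1
end
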